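/- Let α, β ∈ (0,1) with α + β > 1, v ∈ C^α and w ∈ C^β (Schauder-Hölder spaces). Then the Lévy area L(v,w) := Σ_p (∫_0^· Δ_p v d(S_{p−1} w) − ∫_0^· d(S_{p−1} v) Δ_p w) converges and defines a bounded bilinear operator from C^α × C^β to C^{α+β}, i.e. ‖L(v,w)‖_{α+β} ≲ ‖v‖_α ‖w‖_β. -/

import Mathlib

/-!
The `p`-th Lévy term is the primitive of `Δ_p v · (S_{p-1} w)' - (S_{p-1} v)' · Δ_p w`, an integrand
of size `‖v‖_α ‖w‖_β 2^{(1-α-β)p}`; as `α + β > 1` the terms are summable uniformly on `[0,1]`.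
A Schauder coefficient of generation `i` of the `p`-th term is a second difference over a dyadic
cell of length `2^{-i}`. For `p ≥ i` it is bounded by `2^{-i} 2^{(1-α-β)p}`. For `p < i` the
integrand is affine on that cell, with slope of size `2^{(2-α-β)p}`, so the second difference is
`O(2^{-2i} 2^{(2-α-β)p})`. Both geometric series in `p` are dominated by their terms at `p = i`,
which are of order `2^{-(α+β)i}`.
-/

noncomputable section
open MeasureTheory Set

namespace Sch

/-- dyadic point `t⁰_{pm} = (m-1)/2^p`. -/
def pt0 (p m : ℕ) : ℝ := ((m : ℝ) - 1) / 2 ^ p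
/-- dyadic point `t¹_{pm} = (2m-1)/2^{p+1}`. -/
def pt1 (p m : ℕ) : ℝ := (2 * (m : ℝ) - 1) / 2 ^ (p + 1)
/-- dyadic point `t²_{pm} = m/2^p`. -/
def pt2 (p m : ℕ) : ℝ := (m : ℝ) / 2 ^ p

/-- The rescaled Haar function `χ_{pm} = 2^{p/2} H_{pm}`, with the conventions
`χ_{00} = 1` on `[0,1)` (derivative of `φ_{00}(t) = t`) and `χ_{p0} ≡ 0` for `p ≥ 1`. -/
def chi (p m : ℕ) (t : ℝ) : ℝ :=
  if m = 0 then (if p = 0 ∧ 0 ≤ t ∧ t < 1 then 1 else 0)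
  else if pt0 p m ≤ t ∧ t < pt1 p m then (2 : ℝ) ^ p
  else if pt1 p m ≤ t ∧ t < pt2 p m then -(2 : ℝ) ^ p
  else 0

/-- The rescaled Schauder tent function `φ_{pm} = 2^{p/2} G_{pm} = ∫_0^· χ_{pm}`. -/
def phi (p m : ℕ) (t : ℝ) : ℝ := ∫ s in (0:ℝ)..t, chi p m s

variable {E F G : Type*} [NormedAddCommGroup E] [NormedSpace ℝ E]
  [NormedAddCommGroup F] [NormedSpace ℝ F] [NormedAddCommGroup G] [NormedSpace ℝ G]

/-- The (rescaled) Schauder coefficient `f_{pm} = 2f(t¹_{pm}) - f(t⁰_{pm}) - f(t²_{pm})`,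
with the conventions `f_{00} = f(1) - f(0)` and `f_{p0} = 0` for `p ≥ 1`. -/
def coeff (f : ℝ → E) (p m : ℕ) : E :=
  if m = 0 then (if p = 0 then f 1 - f 0 else 0)
  else f (pt1 p m) + f (pt1 p m) - f (pt0 p m) - f (pt2 p m)

/-- Shifted Schauder blocks: `block f 0 = Δ_{-1} f ≡ f(0)` and `block f (p+1) = Δ_p f`. -/
def block (f : ℝ → E) : ℕ → ℝ → E
  | 0 => fun _ => f 0
  | (p + 1) => fun t => ∑ m ∈ Finset.range (2 ^ p + 1), phi p m t • coeff f p m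

/-- Partial sum `psum f p = S_{p-1} f` (blocks of generations `-1, 0, …, p-1`),
the piecewise linear interpolation of `f` on the dyadic grid of generation `p`. -/
def psum (f : ℝ → E) (p : ℕ) (t : ℝ) : E := ∑ k ∈ Finset.range (p + 1), block f k t

/-- Derivative of the shifted Schauder block. -/
def dblock (f : ℝ → E) : ℕ → ℝ → E
  | 0 => fun _ => 0
  | (p + 1) => fun t => ∑ m ∈ Finset.range (2 ^ p + 1), chi p m t • coeff f p m

/-- Derivative of `psum f p = S_{p-1} f`. -/
def dpsum (f : ℝ → E) (p : ℕ) (t : ℝ) : E := ∑ k ∈ Finset.range (p + 1), dblock f k t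

/-- `CoeffBound γ f K` expresses `‖f‖_γ = sup_{p,m} 2^{pγ} |f_{pm}| ≤ K`
(including the generation-(-1) coefficient `f_{-1,0} = f(0)`). -/
def CoeffBound (γ : ℝ) (f : ℝ → E) (K : ℝ) : Prop :=
  (2 : ℝ) ^ (-γ) * ‖f 0‖ ≤ K ∧
  ∀ p m : ℕ, m ≤ 2 ^ p → (2 : ℝ) ^ (γ * (p : ℝ)) * ‖coeff f p m‖ ≤ K

/-- The Schauder paraproduct `π_<(v,w) = ∑_{p≥0} S_{p-1}v · Δ_p w`. -/
def para (v : ℝ → (E →L[ℝ] F)) (w : ℝ → E) (t : ℝ) : F :=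
  ∑' p : ℕ, (psum v p t) (block w (p + 1) t)

/-- The `p`-th term of the Lévy area: `∫_0^t Δ_p v dS_{p-1}w - ∫_0^t d(S_{p-1}v) Δ_p w`. -/
def leviTerm (v : ℝ → (E →L[ℝ] F)) (w : ℝ → E) (p : ℕ) (t : ℝ) : F :=
  ∫ s in (0:ℝ)..t, ((block v (p + 1) s) (dpsum w p s) - (dpsum v p s) (block w (p + 1) s))

/-- The Lévy area `L(v,w) = ∑_p (∫ Δ_p v dS_{p-1}w - ∫ d(S_{p-1}v) Δ_p w)`. -/
def levi (v : ℝ → (E →L[ℝ] F)) (w : ℝ → E) (t : ℝ) : F := ∑' p : ℕ, leviTerm v w p t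

/-- The symmetric part
`S(v,w) = ∑_{m,n≤1} v_{0m}w_{0n} ∫_0^· φ_{0m} dφ_{0n} + (1/2) ∑_{p≥1} Δ_p v Δ_p w`. -/
def symPart (v : ℝ → (E →L[ℝ] F)) (w : ℝ → E) (t : ℝ) : F :=
  (∑ m ∈ Finset.range 2, ∑ n ∈ Finset.range 2,
      (∫ s in (0:ℝ)..t, phi 0 m s * chi 0 n s) • ((coeff v 0 m) (coeff w 0 n)))
    + (1 / 2 : ℝ) • ∑' p : ℕ, (block v (p + 2) t) (block w (p + 2) t)

/-- The Young integral `I(v, dw) = L(v,w) + S(v,w) + π_<(v,w)`. -/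
def young (v : ℝ → (E →L[ℝ] F)) (w : ℝ → E) (t : ℝ) : F :=
  levi v w t + symPart v w t + para v w t

end Sch

namespace Sch

open intervalIntegral
open scoped Finset

def cell (p m : ℕ) : Set ℝ := Ico (pt0 p m) (pt2 p m)

section Dyadic

lemma pt1_eq_pt0_add (p m : ℕ) : pt1 p m = pt0 p m + 1 / 2 ^ (p + 1) := by
  unfold pt0 pt1; rw [pow_succ]; field_simp; ring

lemma pt2_eq_pt1_add (p m : ℕ) : pt2 p m = pt1 p m + 1 / 2 ^ (p + 1) := by
  unfold pt1 pt2; rw [pow_succ]; field_simp; ring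

lemma pt2_eq_pt0_add (p m : ℕ) : pt2 p m = pt0 p m + 1 / 2 ^ p := by
  unfold pt0 pt2; field_simp; ring

lemma pt0_lt_pt1 (p m : ℕ) : pt0 p m < pt1 p m := by
  rw [pt1_eq_pt0_add]; exact lt_add_of_pos_right _ (by positivity)

lemma pt1_lt_pt2 (p m : ℕ) : pt1 p m < pt2 p m := by
  rw [pt2_eq_pt1_add]; exact lt_add_of_pos_right _ (by positivity)

lemma pt0_nonneg {p m : ℕ} (hm : m ≠ 0) : 0 ≤ pt0 p m := by
  have : (1 : ℝ) ≤ m := by exact_mod_cast Nat.one_le_iff_ne_zero.2 hm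
  exact div_nonneg (by linarith) (by positivity)

lemma pt2_le_one {p m : ℕ} (hm : m ≤ 2 ^ p) : pt2 p m ≤ 1 := by
  rw [pt2, div_le_one (by positivity)]; exact_mod_cast hm

lemma eq_of_mem_cell {p a b : ℕ} {x : ℝ} (ha : x ∈ cell p a) (hb : x ∈ cell p b) : a = b := by
  have h2 : (0 : ℝ) < 2 ^ p := by positivity
  simp only [cell, mem_Ico, pt0, pt2, div_le_iff₀ h2, lt_div_iff₀ h2] at ha hb
  have hab : (a : ℝ) < b + 1 := by linarith
  have hba : (b : ℝ) < a + 1 := by linarith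
  norm_cast at hab hba
  omega

lemma dyadic_le_pt0_or_pt2_le {e i : ℕ} (he : e ≤ i) (k : ℤ) (m : ℕ) :
    (k : ℝ) / 2 ^ e ≤ pt0 i m ∨ pt2 i m ≤ (k : ℝ) / 2 ^ e := by
  have hk : (k : ℝ) / 2 ^ e = ((k * 2 ^ (i - e) : ℤ) : ℝ) / 2 ^ i := by
    rw [show (2 : ℝ) ^ i = 2 ^ e * 2 ^ (i - e) by rw [← pow_add, Nat.add_sub_cancel' he]]
    push_cast
    field_simp
  rw [hk, pt0, pt2]
  rcases (show k * 2 ^ (i - e) ≤ (m : ℤ) - 1 ∨ (m : ℤ) ≤ k * 2 ^ (i - e) by omega) with h | h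
  · left
    gcongr
    exact_mod_cast h
  · right
    gcongr
    exact_mod_cast h

lemma le_iff_le_of_mem_cell {i m : ℕ} {c s t : ℝ} (hc : c ≤ pt0 i m ∨ pt2 i m ≤ c)
    (hs : s ∈ cell i m) (ht : t ∈ cell i m) : c ≤ s ↔ c ≤ t := by
  rcases hc with hc | hc
  · exact ⟨fun _ => hc.trans ht.1, fun _ => hc.trans hs.1⟩
  · exact ⟨fun h => absurd (h.trans_lt hs.2) hc.not_gt, fun h => absurd (h.trans_lt ht.2) hc.not_gt⟩

end Dyadic

section Haar

lemma abs_chi_le (p m : ℕ) (t : ℝ) : |chi p m t| ≤ 2 ^ p := by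
  have h1 : (1 : ℝ) ≤ 2 ^ p := one_le_pow₀ (by norm_num)
  unfold chi
  split_ifs <;> simp [h1]

lemma abs_chi_zero_le_one (p : ℕ) (t : ℝ) : |chi p 0 t| ≤ 1 := by
  unfold chi
  rw [if_pos rfl]
  split_ifs <;> simp

lemma chi_zero_eq_zero_of_notMem {p : ℕ} {t : ℝ} (ht : t ∉ Ico 0 1) : chi p 0 t = 0 := by
  unfold chi
  rw [if_pos rfl, if_neg fun h => ht h.2]

lemma chi_eq_zero_of_notMem_cell {p m : ℕ} (hm : m ≠ 0) {t : ℝ} (ht : t ∉ cell p m) :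
    chi p m t = 0 := by
  have h01 := pt0_lt_pt1 p m
  have h12 := pt1_lt_pt2 p m
  simp only [cell, mem_Ico, not_and_or, not_le, not_lt] at ht
  unfold chi
  rw [if_neg hm, if_neg, if_neg] <;> rintro ⟨h1, h2⟩ <;> rcases ht with h | h <;> linarith

/-- All breakpoints of `χ_{pn}` (`0`, `1` and dyadic points of generation `≤ p + 1`) lie outside
the cells of generation `i > p`. -/
lemma chi_eq_of_mem_cell {p i n m : ℕ} (hpi : p < i) {s t : ℝ} (hs : s ∈ cell i m)
    (ht : t ∈ cell i m) : chi p n s = chi p n t := by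
  have key : ∀ {e : ℕ} (k : ℤ), e ≤ i → ((k : ℝ) / 2 ^ e ≤ s ↔ (k : ℝ) / 2 ^ e ≤ t) :=
    fun k he => le_iff_le_of_mem_cell (dyadic_le_pt0_or_pt2_le he k m) hs ht
  have h0 : (0 : ℝ) ≤ s ↔ 0 ≤ t := by simpa using key 0 (Nat.zero_le i)
  have h1 : (1 : ℝ) ≤ s ↔ 1 ≤ t := by simpa using key 1 (Nat.zero_le i)
  have hA : pt0 p n ≤ s ↔ pt0 p n ≤ t := by simpa [pt0] using key ((n : ℤ) - 1) hpi.le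
  have hB : pt1 p n ≤ s ↔ pt1 p n ≤ t := by simpa [pt1] using key (2 * (n : ℤ) - 1) hpi
  have hC : pt2 p n ≤ s ↔ pt2 p n ≤ t := by simpa [pt2] using key (n : ℤ) hpi.le
  simp only [chi, ← not_le, h0, h1, hA, hB, hC]

lemma measurable_chi (p m : ℕ) : Measurable (chi p m) :=
  Measurable.ite (.const _)
    (Measurable.ite ((MeasurableSet.const _).inter measurableSet_Ico) measurable_const
      measurable_const)
    (Measurable.ite measurableSet_Ico measurable_const
      (Measurable.ite measurableSet_Ico measurable_const measurable_const))

end Haar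

section Integrals

variable {E : Type*} [NormedAddCommGroup E]

lemma intervalIntegrable_of_norm_le {f : ℝ → E} {C : ℝ} (hf : AEStronglyMeasurable f volume)
    (h : ∀ x, ‖f x‖ ≤ C) (a b : ℝ) : IntervalIntegrable f volume a b :=
  (intervalIntegrable_const (c := C)).mono_fun hf.restrict
    (ae_of_all _ fun x => (h x).trans (le_abs_self C))

lemma integral_eq_mul_of_forall_mem_Ico {f : ℝ → ℝ} {a b c : ℝ} (hab : a ≤ b)
    (h : ∀ x ∈ Ico a b, f x = c) : ∫ x in a..b, f x = (b - a) * c := by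
  rw [integral_of_le hab, ← integral_Ico_eq_integral_Ioc, setIntegral_congr_fun measurableSet_Ico h,
    setIntegral_const, Real.volume_real_Ico_of_le hab, smul_eq_mul]

lemma norm_integral_le_of_eq_zero_off [NormedSpace ℝ E] {f : ℝ → E} {S : Set ℝ} {C : ℝ}
    (hC : ∀ x, ‖f x‖ ≤ C) (hS : ∀ x ∉ S, f x = 0) (a b : ℝ) :
    ‖∫ x in a..b, f x‖ ≤ C * volume.real (uIoc a b ∩ S) := by
  rw [norm_integral_eq_norm_integral_uIoc, setIntegral_eq_of_subset_of_forall_sdiff_eq_zero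
    measurableSet_uIoc inter_subset_left fun x hx => hS x fun h => hx.2 ⟨hx.1, h⟩]
  exact norm_setIntegral_le_of_norm_le_const
    ((measure_mono inter_subset_left).trans_lt measure_Ioc_lt_top) fun x _ => hC x

end Integrals

section Tent

lemma intervalIntegrable_chi (p m : ℕ) (a b : ℝ) : IntervalIntegrable (chi p m) volume a b :=
  intervalIntegrable_of_norm_le (measurable_chi p m).aestronglyMeasurable (abs_chi_le p m) a b

lemma continuous_phi (p m : ℕ) : Continuous (phi p m) :=
  continuous_primitive (intervalIntegrable_chi p m) 0

lemma phi_sub_phi (p m : ℕ) (a b : ℝ) : phi p m b - phi p m a = ∫ x in a..b, chi p m x :=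
  integral_interval_sub_left (intervalIntegrable_chi p m 0 b) (intervalIntegrable_chi p m 0 a)

lemma abs_phi_le_one (p m : ℕ) (t : ℝ) : |phi p m t| ≤ 1 := by
  rcases eq_or_ne m 0 with rfl | hm
  · calc |phi p 0 t| ≤ 1 * volume.real (uIoc 0 t ∩ Ico 0 1) :=
          norm_integral_le_of_eq_zero_off (abs_chi_zero_le_one p)
            (fun _ => chi_zero_eq_zero_of_notMem) 0 t
      _ ≤ 1 * volume.real (Ico (0 : ℝ) 1) := by
          gcongr
          exacts [measure_Ico_lt_top.ne, inter_subset_right]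
      _ = 1 := by simp
  · calc |phi p m t| ≤ 2 ^ p * volume.real (uIoc 0 t ∩ cell p m) :=
          norm_integral_le_of_eq_zero_off (abs_chi_le p m)
            (fun _ => chi_eq_zero_of_notMem_cell hm) 0 t
      _ ≤ 2 ^ p * volume.real (cell p m) := by
          gcongr
          exacts [measure_Ico_lt_top.ne, inter_subset_right]
      _ = 1 := by
          rw [cell, Real.volume_real_Ico_of_le ((pt0_lt_pt1 p m).trans (pt1_lt_pt2 p m)).le,
            pt2_eq_pt0_add]
          field_simp
          ring

lemma phi_eq_zero_of_le_pt0 {p m : ℕ} (hm : m ≠ 0) {t : ℝ} (ht : t ≤ pt0 p m) : phi p m t = 0 := by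
  have hnull : volume.real (uIoc 0 t ∩ cell p m) = 0 := by
    refine measureReal_mono_null (s₂ := {pt0 p m}) (fun x hx => ?_) (by simp [Measure.real])
      (by simp)
    exact le_antisymm (hx.1.2.trans (max_le (pt0_nonneg hm) ht)) hx.2.1
  have := norm_integral_le_of_eq_zero_off (abs_chi_le p m)
    (fun _ => chi_eq_zero_of_notMem_cell hm) 0 t
  rw [hnull, mul_zero] at this
  exact norm_le_zero_iff.1 this

lemma phi_pt2 {p m : ℕ} (hm : m ≠ 0) : phi p m (pt2 p m) = 0 := by
  have hup : ∫ x in pt0 p m..pt1 p m, chi p m x = (pt1 p m - pt0 p m) * 2 ^ p :=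
    integral_eq_mul_of_forall_mem_Ico (pt0_lt_pt1 p m).le fun x hx => by
      rw [chi, if_neg hm, if_pos (show pt0 p m ≤ x ∧ x < pt1 p m from hx)]
  have hdown : ∫ x in pt1 p m..pt2 p m, chi p m x = (pt2 p m - pt1 p m) * -2 ^ p :=
    integral_eq_mul_of_forall_mem_Ico (pt1_lt_pt2 p m).le fun x hx => by
      rw [chi, if_neg hm, if_neg fun h => h.2.not_ge hx.1,
        if_pos (show pt1 p m ≤ x ∧ x < pt2 p m from hx)]
  have h := phi_sub_phi p m (pt0 p m) (pt2 p m)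
  rw [← integral_add_adjacent_intervals (intervalIntegrable_chi p m _ _)
    (intervalIntegrable_chi p m _ _), hup, hdown, phi_eq_zero_of_le_pt0 hm le_rfl] at h
  rw [pt2_eq_pt1_add, pt1_eq_pt0_add] at h ⊢
  linarith

lemma phi_eq_zero_of_notMem_cell {p m : ℕ} (hm : m ≠ 0) {t : ℝ} (ht : t ∉ cell p m) :
    phi p m t = 0 := by
  simp only [cell, mem_Ico, not_and_or, not_le, not_lt] at ht
  rcases ht with ht | ht
  · exact phi_eq_zero_of_le_pt0 hm ht.le
  · have h := phi_sub_phi p m (pt2 p m) t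
    rwa [phi_pt2 hm, sub_zero, integral_eq_mul_of_forall_mem_Ico ht
      fun x hx => chi_eq_zero_of_notMem_cell hm fun h => hx.1.not_gt h.2, mul_zero] at h

lemma phi_add_of_mem_cell {p i n m : ℕ} (hpi : p < i) {s h : ℝ} (hh : 0 ≤ h)
    (hs : s ∈ cell i m) (hsh : s + h ∈ cell i m) :
    phi p n (s + h) = phi p n s + h * chi p n s := by
  rw [← sub_eq_iff_eq_add', phi_sub_phi, integral_eq_mul_of_forall_mem_Ico (by linarith)
    fun x hx => chi_eq_of_mem_cell hpi ⟨hs.1.trans hx.1, hx.2.trans hsh.2⟩ hs]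
  ring

/-- Cells of one generation are disjoint, so at most one `g m` with `m ≠ 0` is non-zero. -/
lemma sum_abs_le_of_eq_zero_off_cell {g : ℕ → ℝ} {p : ℕ} {s B : ℝ} (hB : ∀ m, |g m| ≤ B)
    (hg : ∀ m, m ≠ 0 → s ∉ cell p m → g m = 0) :
    ∑ m ∈ Finset.range (2 ^ p + 1), |g m| ≤ |g 0| + B := by
  rw [Finset.sum_range_succ', add_comm]
  gcongr
  have hcard : #{m ∈ Finset.range (2 ^ p) | |g (m + 1)| ≠ 0} ≤ 1 := by
    refine Finset.card_le_one.2 fun a ha b hb => ?_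
    simp only [Finset.mem_filter, abs_ne_zero] at ha hb
    have := eq_of_mem_cell (not_not.1 (mt (hg (a + 1) a.succ_ne_zero) ha.2))
      (not_not.1 (mt (hg (b + 1) b.succ_ne_zero) hb.2))
    omega
  calc ∑ m ∈ Finset.range (2 ^ p), |g (m + 1)|
      = ∑ m ∈ Finset.range (2 ^ p) with |g (m + 1)| ≠ 0, |g (m + 1)| :=
        (Finset.sum_filter_ne_zero _).symm
    _ ≤ #{m ∈ Finset.range (2 ^ p) | |g (m + 1)| ≠ 0} • B :=
        Finset.sum_le_card_nsmul _ _ _ fun m _ => hB _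
    _ ≤ 1 • B := nsmul_le_nsmul_left ((abs_nonneg _).trans (hB 0)) hcard
    _ = B := one_nsmul B

lemma sum_abs_chi_le (p : ℕ) (s : ℝ) : ∑ m ∈ Finset.range (2 ^ p + 1), |chi p m s| ≤ 2 * 2 ^ p := by
  have := sum_abs_le_of_eq_zero_off_cell (abs_chi_le p · s)
    fun _ hm => chi_eq_zero_of_notMem_cell hm
  linarith [abs_chi_zero_le_one p s, one_le_pow₀ (M₀ := ℝ) (n := p) one_le_two]

lemma sum_abs_phi_le (p : ℕ) (s : ℝ) : ∑ m ∈ Finset.range (2 ^ p + 1), |phi p m s| ≤ 2 := by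
  have := sum_abs_le_of_eq_zero_off_cell (abs_phi_le_one p · s)
    fun _ hm => phi_eq_zero_of_notMem_cell hm
  linarith [abs_phi_le_one p 0 s]

end Tent

section Coefficients

variable {E : Type*} [NormedAddCommGroup E]

def CoeffDecay (σ : ℝ) (f : ℝ → E) (K : ℝ) : Prop :=
  0 ≤ K ∧ ∀ p m : ℕ, m ≤ 2 ^ p → ‖coeff f p m‖ ≤ K * σ ^ p

lemma two_rpow_mul_mul_rpow_neg_pow (γ : ℝ) (p : ℕ) :
    (2 : ℝ) ^ (γ * p) * ((2 : ℝ) ^ (-γ)) ^ p = 1 := by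
  rw [← Real.rpow_natCast, ← Real.rpow_mul zero_le_two, ← Real.rpow_add two_pos]
  simp

lemma CoeffBound.coeffDecay {γ K : ℝ} {f : ℝ → E} (h : CoeffBound γ f K) :
    CoeffDecay (2 ^ (-γ)) f K := by
  refine ⟨(by positivity : (0 : ℝ) ≤ 2 ^ (-γ) * ‖f 0‖).trans h.1, fun p m hm => ?_⟩
  calc ‖coeff f p m‖ = 2 ^ (γ * p) * ‖coeff f p m‖ * ((2 : ℝ) ^ (-γ)) ^ p := by
        rw [mul_right_comm, two_rpow_mul_mul_rpow_neg_pow, one_mul]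
    _ ≤ K * ((2 : ℝ) ^ (-γ)) ^ p := by gcongr; exact h.2 p m hm

lemma coeffBound_of_coeffDecay {γ K : ℝ} {f : ℝ → E} (h0 : (2 : ℝ) ^ (-γ) * ‖f 0‖ ≤ K)
    (h : CoeffDecay (2 ^ (-γ)) f K) : CoeffBound γ f K := by
  refine ⟨h0, fun p m hm => ?_⟩
  calc (2 : ℝ) ^ (γ * p) * ‖coeff f p m‖ ≤ 2 ^ (γ * p) * (K * ((2 : ℝ) ^ (-γ)) ^ p) := by
        gcongr; exact h.2 p m hm
    _ = K := by rw [mul_left_comm, two_rpow_mul_mul_rpow_neg_pow, mul_one]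

lemma coeff_zero_zero (f : ℝ → E) : coeff f 0 0 = f 1 - f 0 := by
  simp [coeff]

lemma coeff_zero_right (f : ℝ → E) {i : ℕ} (hi : i ≠ 0) : coeff f i 0 = 0 := by
  simp [coeff, hi]

lemma coeff_eq_sub_sub (f : ℝ → E) {i m : ℕ} (hm : m ≠ 0) :
    coeff f i m = (f (pt1 i m) - f (pt0 i m)) - (f (pt2 i m) - f (pt1 i m)) := by
  rw [coeff, if_neg hm]
  abel

lemma coeff_tsum {f : ℕ → ℝ → E} (hf : ∀ t ∈ Icc (0 : ℝ) 1, Summable fun p => f p t) {i m : ℕ}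
    (hm : m ≤ 2 ^ i) : coeff (fun t => ∑' p, f p t) i m = ∑' p, coeff (f p) i m := by
  rcases eq_or_ne m 0 with rfl | hm0
  · rcases eq_or_ne i 0 with rfl | hi
    · simp only [coeff_zero_zero]
      exact ((hf 1 ⟨zero_le_one, le_rfl⟩).tsum_sub (hf 0 ⟨le_rfl, zero_le_one⟩)).symm
    · simp only [coeff_zero_right _ hi, tsum_zero]
  · have h01 := (pt0_lt_pt1 i m).le
    have h12 := (pt1_lt_pt2 i m).le
    have h0 := hf (pt0 i m) ⟨pt0_nonneg hm0, (h01.trans h12).trans (pt2_le_one hm)⟩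
    have h1 := hf (pt1 i m) ⟨(pt0_nonneg hm0).trans h01, h12.trans (pt2_le_one hm)⟩
    have h2 := hf (pt2 i m) ⟨(pt0_nonneg hm0).trans (h01.trans h12), pt2_le_one hm⟩
    simp only [coeff_eq_sub_sub _ hm0]
    rw [← h1.tsum_sub h0, ← h2.tsum_sub h1, ← (h1.sub h0).tsum_sub (h2.sub h1)]

lemma CoeffDecay.mul_pow_nonneg {σ K : ℝ} {f : ℝ → E} (hf : CoeffDecay σ f K) (p : ℕ) :
    0 ≤ K * σ ^ p :=
  (norm_nonneg _).trans (hf.2 p 0 (Nat.zero_le _))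

end Coefficients

section Blocks

variable {E : Type*} [NormedAddCommGroup E] [NormedSpace ℝ E] {σ K : ℝ} {f : ℝ → E}

lemma CoeffDecay.norm_sum_smul_coeff_le (hf : CoeffDecay σ f K) (a : ℕ → ℝ) (p : ℕ) :
    ‖∑ m ∈ Finset.range (2 ^ p + 1), a m • coeff f p m‖
      ≤ (∑ m ∈ Finset.range (2 ^ p + 1), |a m|) * (K * σ ^ p) := by
  rw [Finset.sum_mul]
  refine (norm_sum_le _ _).trans (Finset.sum_le_sum fun m hm => ?_)
  rw [norm_smul, Real.norm_eq_abs]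
  exact mul_le_mul_of_nonneg_left (hf.2 p m (Finset.mem_range_succ_iff.1 hm)) (abs_nonneg _)

lemma CoeffDecay.norm_block_succ_le (hf : CoeffDecay σ f K) (p : ℕ) (s : ℝ) :
    ‖block f (p + 1) s‖ ≤ 2 * K * σ ^ p :=
  calc ‖block f (p + 1) s‖ ≤ (∑ m ∈ Finset.range (2 ^ p + 1), |phi p m s|) * (K * σ ^ p) :=
        hf.norm_sum_smul_coeff_le _ p
    _ ≤ 2 * (K * σ ^ p) := mul_le_mul_of_nonneg_right (sum_abs_phi_le p s) (hf.mul_pow_nonneg p)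
    _ = 2 * K * σ ^ p := by ring

lemma CoeffDecay.norm_dblock_succ_le (hf : CoeffDecay σ f K) (p : ℕ) (s : ℝ) :
    ‖dblock f (p + 1) s‖ ≤ 2 * K * (2 * σ) ^ p :=
  calc ‖dblock f (p + 1) s‖ ≤ (∑ m ∈ Finset.range (2 ^ p + 1), |chi p m s|) * (K * σ ^ p) :=
        hf.norm_sum_smul_coeff_le _ p
    _ ≤ 2 * 2 ^ p * (K * σ ^ p) :=
        mul_le_mul_of_nonneg_right (sum_abs_chi_le p s) (hf.mul_pow_nonneg p)
    _ = 2 * K * (2 * σ) ^ p := by ring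

lemma CoeffDecay.norm_dpsum_le (hf : CoeffDecay σ f K) (hσ : 1 < 2 * σ) (p : ℕ) (s : ℝ) :
    ‖dpsum f p s‖ ≤ 2 * K / (2 * σ - 1) * (2 * σ) ^ p := by
  have hsum : ∑ k ∈ Finset.range p, (2 * σ) ^ k ≤ (2 * σ) ^ p / (2 * σ - 1) := by
    rw [geom_sum_eq hσ.ne', div_le_div_iff_of_pos_right (by linarith)]
    linarith
  calc ‖dpsum f p s‖ = ‖∑ k ∈ Finset.range p, dblock f (k + 1) s‖ := by
        rw [dpsum, Finset.sum_range_succ']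
        simp [dblock]
    _ ≤ ∑ k ∈ Finset.range p, 2 * K * (2 * σ) ^ k :=
        (norm_sum_le _ _).trans (Finset.sum_le_sum fun k _ => hf.norm_dblock_succ_le k s)
    _ ≤ 2 * K * ((2 * σ) ^ p / (2 * σ - 1)) := by
        rw [← Finset.mul_sum]
        exact mul_le_mul_of_nonneg_left hsum (by linarith [hf.1])
    _ = 2 * K / (2 * σ - 1) * (2 * σ) ^ p := by ring

lemma continuous_block (f : ℝ → E) (k : ℕ) : Continuous (block f k) := by
  rcases k with _ | k
  · exact continuous_const
  · exact continuous_finsetSum _ fun m _ => (continuous_phi k m).smul continuous_const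

lemma aestronglyMeasurable_dpsum (f : ℝ → E) (p : ℕ) :
    AEStronglyMeasurable (dpsum f p) volume := by
  refine Finset.aestronglyMeasurable_fun_sum _ fun k _ => ?_
  rcases k with _ | k
  · exact aestronglyMeasurable_const
  · exact Finset.aestronglyMeasurable_fun_sum _ fun m _ =>
      (measurable_chi k m).aestronglyMeasurable.smul_const _

lemma block_add_of_mem_cell (f : ℝ → E) {p i m : ℕ} (hpi : p < i) {s h : ℝ} (hh : 0 ≤ h)
    (hs : s ∈ cell i m) (hsh : s + h ∈ cell i m) :
    block f (p + 1) (s + h) = block f (p + 1) s + h • dblock f (p + 1) s := by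
  simp only [block, dblock, Finset.smul_sum, ← Finset.sum_add_distrib,
    phi_add_of_mem_cell hpi hh hs hsh, add_smul, mul_smul]

lemma dpsum_eq_of_mem_cell (f : ℝ → E) {p i m : ℕ} (hpi : p ≤ i) {s t : ℝ}
    (hs : s ∈ cell i m) (ht : t ∈ cell i m) : dpsum f p s = dpsum f p t := by
  refine Finset.sum_congr rfl fun k hk => ?_
  rcases k with _ | k
  · rfl
  · have hki : k < i := by simp only [Finset.mem_range] at hk; omega
    simp only [dblock, chi_eq_of_mem_cell hki hs ht]

end Blocks

section Integrand

variable {E F : Type*} [NormedAddCommGroup E] [NormedSpace ℝ E] [NormedAddCommGroup F]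
  [NormedSpace ℝ F]

def leviIntegrand (v : ℝ → (E →L[ℝ] F)) (w : ℝ → E) (p : ℕ) (s : ℝ) : F :=
  (block v (p + 1) s) (dpsum w p s) - (dpsum v p s) (block w (p + 1) s)

def leviSlope (v : ℝ → (E →L[ℝ] F)) (w : ℝ → E) (p : ℕ) (s : ℝ) : F :=
  (dblock v (p + 1) s) (dpsum w p s) - (dpsum v p s) (dblock w (p + 1) s)

def leviConst (σv σw : ℝ) : ℝ := 4 * (1 / (2 * σv - 1) + 1 / (2 * σw - 1))

lemma leviConst_pos {σv σw : ℝ} (hσv : 1 < 2 * σv) (hσw : 1 < 2 * σw) : 0 < leviConst σv σw := by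
  have := sub_pos.2 hσv
  have := sub_pos.2 hσw
  unfold leviConst
  positivity

lemma norm_apply_sub_apply_le (A B : E →L[ℝ] F) (x y : E) {a b c d : ℝ} (hA : ‖A‖ ≤ a)
    (hx : ‖x‖ ≤ b) (hB : ‖B‖ ≤ c) (hy : ‖y‖ ≤ d) : ‖A x - B y‖ ≤ a * b + c * d :=
  (norm_sub_le _ _).trans <| add_le_add
    ((A.le_opNorm x).trans (mul_le_mul hA hx (norm_nonneg _) ((norm_nonneg _).trans hA)))
    ((B.le_opNorm y).trans (mul_le_mul hB hy (norm_nonneg _) ((norm_nonneg _).trans hB)))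

variable {v : ℝ → (E →L[ℝ] F)} {w : ℝ → E} {σv σw Kv Kw : ℝ}

lemma norm_leviIntegrand_le (hv : CoeffDecay σv v Kv) (hw : CoeffDecay σw w Kw)
    (hσv : 1 < 2 * σv) (hσw : 1 < 2 * σw) (p : ℕ) (s : ℝ) :
    ‖leviIntegrand v w p s‖ ≤ leviConst σv σw * (Kv * Kw) * (2 * (σv * σw)) ^ p :=
  (norm_apply_sub_apply_le _ _ _ _ (hv.norm_block_succ_le p s) (hw.norm_dpsum_le hσw p s)
    (hv.norm_dpsum_le hσv p s) (hw.norm_block_succ_le p s)).trans_eq <| by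
    unfold leviConst
    ring

lemma norm_leviSlope_le (hv : CoeffDecay σv v Kv) (hw : CoeffDecay σw w Kw)
    (hσv : 1 < 2 * σv) (hσw : 1 < 2 * σw) (p : ℕ) (s : ℝ) :
    ‖leviSlope v w p s‖ ≤ leviConst σv σw * (Kv * Kw) * (4 * (σv * σw)) ^ p :=
  (norm_apply_sub_apply_le _ _ _ _ (hv.norm_dblock_succ_le p s) (hw.norm_dpsum_le hσw p s)
    (hv.norm_dpsum_le hσv p s) (hw.norm_dblock_succ_le p s)).trans_eq <| by
    rw [mul_pow 4, show (4 : ℝ) ^ p = 2 ^ p * 2 ^ p by rw [← mul_pow]; norm_num]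
    unfold leviConst
    ring

lemma aestronglyMeasurable_leviIntegrand (v : ℝ → (E →L[ℝ] F)) (w : ℝ → E) (p : ℕ) :
    AEStronglyMeasurable (leviIntegrand v w p) volume := by
  have apply : ∀ {A : ℝ → E →L[ℝ] F} {x : ℝ → E}, AEStronglyMeasurable A volume →
      AEStronglyMeasurable x volume → AEStronglyMeasurable (fun s => A s (x s)) volume :=
    (ContinuousLinearMap.id ℝ (E →L[ℝ] F)).aestronglyMeasurable_comp₂
  exact (apply (continuous_block v _).aestronglyMeasurable (aestronglyMeasurable_dpsum w p)).sub
    (apply (aestronglyMeasurable_dpsum v p) (continuous_block w _).aestronglyMeasurable)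

lemma intervalIntegrable_leviIntegrand (hv : CoeffDecay σv v Kv) (hw : CoeffDecay σw w Kw)
    (hσv : 1 < 2 * σv) (hσw : 1 < 2 * σw) (p : ℕ) (a b : ℝ) :
    IntervalIntegrable (leviIntegrand v w p) volume a b :=
  intervalIntegrable_of_norm_le (aestronglyMeasurable_leviIntegrand v w p)
    (norm_leviIntegrand_le hv hw hσv hσw p) a b

lemma leviIntegrand_add_of_mem_cell (v : ℝ → (E →L[ℝ] F)) (w : ℝ → E) {p i m : ℕ} (hpi : p < i)
    {s h : ℝ} (hh : 0 ≤ h) (hs : s ∈ cell i m) (hsh : s + h ∈ cell i m) :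
    leviIntegrand v w p (s + h) = leviIntegrand v w p s + h • leviSlope v w p s := by
  simp only [leviIntegrand, leviSlope, block_add_of_mem_cell _ hpi hh hs hsh,
    dpsum_eq_of_mem_cell _ hpi.le hsh hs, add_apply, smul_apply, map_add, map_smul, smul_sub]
  abel

end Integrand

section LeviTerm

variable {E F : Type*} [NormedAddCommGroup E] [NormedSpace ℝ E] [NormedAddCommGroup F]
  [NormedSpace ℝ F] {v : ℝ → (E →L[ℝ] F)} {w : ℝ → E} {σv σw Kv Kw : ℝ}

lemma leviTerm_sub_leviTerm {p : ℕ}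
    (hint : ∀ a b, IntervalIntegrable (leviIntegrand v w p) volume a b) (a b : ℝ) :
    leviTerm v w p b - leviTerm v w p a = ∫ s in a..b, leviIntegrand v w p s :=
  integral_interval_sub_left (hint 0 b) (hint 0 a)

lemma norm_coeff_leviTerm_le (hv : CoeffDecay σv v Kv) (hw : CoeffDecay σw w Kw)
    (hσv : 1 < 2 * σv) (hσw : 1 < 2 * σw) (i m p : ℕ) :
    ‖coeff (leviTerm v w p) i m‖ ≤ leviConst σv σw * (Kv * Kw) * (2 * (σv * σw)) ^ p / 2 ^ i := by
  set B := leviConst σv σw * (Kv * Kw) * (2 * (σv * σw)) ^ p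
  have hB : ∀ s, ‖leviIntegrand v w p s‖ ≤ B := norm_leviIntegrand_le hv hw hσv hσw p
  have hint := intervalIntegrable_leviIntegrand hv hw hσv hσw p
  rcases eq_or_ne m 0 with rfl | hm
  · rcases eq_or_ne i 0 with rfl | hi
    · rw [coeff_zero_zero, leviTerm_sub_leviTerm hint, pow_zero, div_one]
      simpa using norm_integral_le_of_norm_le_const (a := 0) (b := 1) fun s _ => hB s
    · rw [coeff_zero_right _ hi, norm_zero]
      exact div_nonneg ((norm_nonneg _).trans (hB 0)) (by positivity)
  · rw [coeff_eq_sub_sub _ hm, leviTerm_sub_leviTerm hint, leviTerm_sub_leviTerm hint]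
    calc _ ≤ B * |pt1 i m - pt0 i m| + B * |pt2 i m - pt1 i m| :=
          (norm_sub_le _ _).trans (add_le_add (norm_integral_le_of_norm_le_const fun s _ => hB s)
            (norm_integral_le_of_norm_le_const fun s _ => hB s))
      _ = B / 2 ^ i := by
          rw [pt2_eq_pt1_add, pt1_eq_pt0_add]
          simp only [add_sub_cancel_left]
          rw [abs_of_pos (by positivity), pow_succ]
          field_simp
          ring

/-- On cells of generation `i > p` the integrand is affine, so the second difference defining the
coefficient only sees its slope: this gains the factor `2^{-2i}` instead of `2^{-i}`. -/
lemma norm_coeff_leviTerm_le_of_lt (hv : CoeffDecay σv v Kv) (hw : CoeffDecay σw w Kw)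
    (hσv : 1 < 2 * σv) (hσw : 1 < 2 * σw) {i p : ℕ} (hpi : p < i) (m : ℕ) :
    ‖coeff (leviTerm v w p) i m‖
      ≤ leviConst σv σw * (Kv * Kw) * (4 * (σv * σw)) ^ p / 4 ^ (i + 1) := by
  set S := leviConst σv σw * (Kv * Kw) * (4 * (σv * σw)) ^ p
  have hS : ∀ s, ‖leviSlope v w p s‖ ≤ S := norm_leviSlope_le hv hw hσv hσw p
  have hint := intervalIntegrable_leviIntegrand hv hw hσv hσw p
  rcases eq_or_ne m 0 with rfl | hm
  · rw [coeff_zero_right _ (by omega), norm_zero]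
    exact div_nonneg ((norm_nonneg _).trans (hS 0)) (by positivity)
  set h : ℝ := 1 / 2 ^ (i + 1) with h_def
  have hh : 0 < h := by positivity
  have e1 : pt1 i m = pt0 i m + h := pt1_eq_pt0_add i m
  have e2 : pt2 i m = pt1 i m + h := pt2_eq_pt1_add i m
  have hshift : ∫ s in pt1 i m..pt2 i m, leviIntegrand v w p s
      = ∫ s in pt0 i m..pt1 i m, leviIntegrand v w p (s + h) := by
    rw [integral_comp_add_right, ← e1, ← e2]
  have hint' : IntervalIntegrable (fun s => leviIntegrand v w p (s + h)) volume
      (pt0 i m) (pt1 i m) := by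
    simpa using (hint (pt0 i m + h) (pt1 i m + h)).comp_add_right h
  have hdiff : ∀ᵐ s, s ∈ uIoc (pt0 i m) (pt1 i m) →
      ‖leviIntegrand v w p s - leviIntegrand v w p (s + h)‖ ≤ h * S := by
    filter_upwards [compl_mem_ae_iff.2 (measure_singleton (pt1 i m))] with s hs1 hs
    rw [uIoc_of_le (pt0_lt_pt1 i m).le] at hs
    have hs' : s ∈ cell i m := ⟨hs.1.le, hs.2.trans_lt (pt1_lt_pt2 i m)⟩
    have hsh : s + h ∈ cell i m :=
      ⟨by linarith [hs.1], by rw [e2]; linarith [lt_of_le_of_ne hs.2 hs1]⟩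
    rw [leviIntegrand_add_of_mem_cell v w hpi hh.le hs' hsh, sub_add_cancel_left, norm_neg,
      norm_smul, Real.norm_of_nonneg hh.le]
    exact mul_le_mul_of_nonneg_left (hS s) hh.le
  rw [coeff_eq_sub_sub _ hm, leviTerm_sub_leviTerm hint, leviTerm_sub_leviTerm hint, hshift,
    ← integral_sub (hint _ _) hint']
  calc _ ≤ h * S * |pt1 i m - pt0 i m| := norm_integral_le_of_norm_le_const_ae hdiff
    _ = S / 4 ^ (i + 1) := by
        rw [e1, add_sub_cancel_left, abs_of_pos hh, h_def,
          show (4 : ℝ) ^ (i + 1) = 2 ^ (i + 1) * 2 ^ (i + 1) by rw [← mul_pow]; norm_num]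
        field_simp

end LeviTerm

section Weights

/-- Bound for the contribution of the `p`-th Lévy term to a Schauder coefficient of generation
`i`, where `ρ = σv σw`. -/
def leviWeight (ρ : ℝ) (i p : ℕ) : ℝ :=
  if p < i then (4 * ρ) ^ p / 4 ^ (i + 1) else (2 * ρ) ^ p / 2 ^ i

def leviWeightConst (ρ : ℝ) : ℝ := 1 / (4 * (4 * ρ - 1)) + 1 / (1 - 2 * ρ)

variable {ρ : ℝ}

lemma leviWeightConst_pos (h4 : 1 < 4 * ρ) (h2 : 2 * ρ < 1) : 0 < leviWeightConst ρ := by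
  have := sub_pos.2 h4
  have := sub_pos.2 h2
  unfold leviWeightConst
  positivity

lemma leviWeight_add (ρ : ℝ) (i p : ℕ) : leviWeight ρ i (p + i) = ρ ^ i * (2 * ρ) ^ p := by
  rw [leviWeight, if_neg (by omega), pow_add, mul_pow 2 ρ i]
  field_simp

lemma summable_leviWeight (hρ : 0 ≤ ρ) (h2 : 2 * ρ < 1) (i : ℕ) : Summable (leviWeight ρ i) := by
  rw [← summable_nat_add_iff i, funext (leviWeight_add ρ i)]
  exact (summable_geometric_of_lt_one (by positivity) h2).mul_left _

lemma tsum_leviWeight_le (h4 : 1 < 4 * ρ) (h2 : 2 * ρ < 1) (i : ℕ) :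
    ∑' p, leviWeight ρ i p ≤ leviWeightConst ρ * ρ ^ i := by
  have hρ : 0 ≤ ρ := by linarith
  have head : ∑ p ∈ Finset.range i, leviWeight ρ i p ≤ ρ ^ i / (4 * (4 * ρ - 1)) := by
    rw [Finset.sum_congr rfl fun p hp => by rw [leviWeight, if_pos (Finset.mem_range.1 hp)],
      ← Finset.sum_div, geom_sum_eq (by linarith), div_div,
      div_le_div_iff₀ (mul_pos (by linarith) (by positivity)) (by linarith), mul_pow, pow_succ]
    nlinarith [pow_pos (by norm_num : (0 : ℝ) < 4) i, pow_nonneg hρ i]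
  have tail : ∑' p, leviWeight ρ i (p + i) = ρ ^ i / (1 - 2 * ρ) := by
    rw [tsum_congr (leviWeight_add ρ i), tsum_mul_left, tsum_geometric_of_lt_one (by linarith) h2,
      div_eq_mul_inv]
  rw [← (summable_leviWeight hρ h2 i).sum_add_tsum_nat_add i, tail, leviWeightConst]
  linarith [show ρ ^ i / (4 * (4 * ρ - 1)) + ρ ^ i / (1 - 2 * ρ)
    = (1 / (4 * (4 * ρ - 1)) + 1 / (1 - 2 * ρ)) * ρ ^ i by ring]

end Weights

section Levi

variable {E F : Type*} [NormedAddCommGroup E] [NormedSpace ℝ E] [NormedAddCommGroup F]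
  [NormedSpace ℝ F] {v : ℝ → (E →L[ℝ] F)} {w : ℝ → E} {σv σw Kv Kw : ℝ}

lemma norm_coeff_leviTerm_le_leviWeight (hv : CoeffDecay σv v Kv) (hw : CoeffDecay σw w Kw)
    (hσv : 1 < 2 * σv) (hσw : 1 < 2 * σw) (i m p : ℕ) :
    ‖coeff (leviTerm v w p) i m‖ ≤ leviConst σv σw * (Kv * Kw) * leviWeight (σv * σw) i p := by
  rw [leviWeight]
  split_ifs with hpi
  · rw [mul_div_assoc']
    exact norm_coeff_leviTerm_le_of_lt hv hw hσv hσw hpi m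
  · rw [mul_div_assoc']
    exact norm_coeff_leviTerm_le hv hw hσv hσw i m p

lemma norm_leviTerm_le (hv : CoeffDecay σv v Kv) (hw : CoeffDecay σw w Kw)
    (hσv : 1 < 2 * σv) (hσw : 1 < 2 * σw) (p : ℕ) {t : ℝ} (ht : t ∈ Icc (0 : ℝ) 1) :
    ‖leviTerm v w p t‖ ≤ leviConst σv σw * (Kv * Kw) * (2 * (σv * σw)) ^ p := by
  have hB := norm_leviIntegrand_le hv hw hσv hσw p
  refine (norm_integral_le_of_norm_le_const fun s _ => hB s).trans ?_
  rw [sub_zero, abs_of_nonneg ht.1]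
  exact mul_le_of_le_one_right ((norm_nonneg _).trans (hB 0)) ht.2

lemma levi_zero (v : ℝ → (E →L[ℝ] F)) (w : ℝ → E) : levi v w 0 = 0 := by
  simp [levi, leviTerm]

variable [CompleteSpace F]

lemma summable_leviTerm (hv : CoeffDecay σv v Kv) (hw : CoeffDecay σw w Kw)
    (hσv : 1 < 2 * σv) (hσw : 1 < 2 * σw) (h2 : 2 * (σv * σw) < 1) {t : ℝ}
    (ht : t ∈ Icc (0 : ℝ) 1) : Summable fun p => leviTerm v w p t :=
  .of_norm_bounded ((summable_geometric_of_lt_one (by nlinarith) h2).mul_left _)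
    fun p => norm_leviTerm_le hv hw hσv hσw p ht

lemma continuousOn_levi (hv : CoeffDecay σv v Kv) (hw : CoeffDecay σw w Kw)
    (hσv : 1 < 2 * σv) (hσw : 1 < 2 * σw) (h2 : 2 * (σv * σw) < 1) :
    ContinuousOn (levi v w) (Icc 0 1) :=
  continuousOn_tsum
    (fun p =>
      (continuous_primitive (intervalIntegrable_leviIntegrand hv hw hσv hσw p) 0).continuousOn)
    ((summable_geometric_of_lt_one (by nlinarith) h2).mul_left _)
    fun p _ ht => norm_leviTerm_le hv hw hσv hσw p ht

lemma coeffDecay_levi (hv : CoeffDecay σv v Kv) (hw : CoeffDecay σw w Kw)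
    (hσv : 1 < 2 * σv) (hσw : 1 < 2 * σw) (h4 : 1 < 4 * (σv * σw)) (h2 : 2 * (σv * σw) < 1) :
    CoeffDecay (σv * σw) (levi v w) (leviConst σv σw * leviWeightConst (σv * σw) * Kv * Kw) := by
  have hC : 0 ≤ leviConst σv σw * (Kv * Kw) :=
    mul_nonneg (leviConst_pos hσv hσw).le (mul_nonneg hv.1 hw.1)
  refine ⟨by nlinarith [leviWeightConst_pos h4 h2], fun i m hm => ?_⟩
  rw [show levi v w = fun t => ∑' p, leviTerm v w p t from rfl,
    coeff_tsum (fun t ht => summable_leviTerm hv hw hσv hσw h2 ht) hm]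
  calc ‖∑' p, coeff (leviTerm v w p) i m‖
      ≤ leviConst σv σw * (Kv * Kw) * ∑' p, leviWeight (σv * σw) i p :=
        tsum_of_norm_bounded ((summable_leviWeight (by nlinarith) h2 i).hasSum.mul_left _)
          (norm_coeff_leviTerm_le_leviWeight hv hw hσv hσw i m)
    _ ≤ leviConst σv σw * (Kv * Kw) * (leviWeightConst (σv * σw) * (σv * σw) ^ i) :=
        mul_le_mul_of_nonneg_left (tsum_leviWeight_le h4 h2 i) hC
    _ = _ := by ring

end Levi

lemma one_lt_two_mul_two_rpow_neg {γ : ℝ} (h : γ < 1) : 1 < 2 * (2 : ℝ) ^ (-γ) := by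
  calc (1 : ℝ) < 2 ^ (1 - γ) := Real.one_lt_rpow one_lt_two (by linarith)
    _ = 2 * 2 ^ (-γ) := by rw [sub_eq_add_neg, Real.rpow_add two_pos, Real.rpow_one]

lemma two_mul_two_rpow_neg_lt_one {γ : ℝ} (h : 1 < γ) : 2 * (2 : ℝ) ^ (-γ) < 1 := by
  calc 2 * (2 : ℝ) ^ (-γ) = 2 ^ (1 - γ) := by
        rw [sub_eq_add_neg, Real.rpow_add two_pos, Real.rpow_one]
    _ < 1 := Real.rpow_lt_one_of_one_lt_of_neg one_lt_two (by linarith)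

lemma one_lt_four_mul_two_rpow_neg {γ : ℝ} (h : γ < 2) : 1 < 4 * (2 : ℝ) ^ (-γ) := by
  calc (1 : ℝ) < 2 ^ (2 - γ) := Real.one_lt_rpow one_lt_two (by linarith)
    _ = 4 * 2 ^ (-γ) := by
        rw [sub_eq_add_neg, Real.rpow_add two_pos, Real.rpow_two]
        norm_num

end Sch

open Sch in
theorem levy_area_bound_general (α β : ℝ) (hα1 : α < 1) (hβ1 : β < 1)
    (hαβ : 1 < α + β) :
    ∃ C > (0:ℝ), ∀ (d n : ℕ)
      (v : ℝ → (EuclideanSpace ℝ (Fin d) →L[ℝ] EuclideanSpace ℝ (Fin n)))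
      (w : ℝ → EuclideanSpace ℝ (Fin d)) (Kv Kw : ℝ),
      ContinuousOn v (Icc 0 1) → ContinuousOn w (Icc 0 1) →
      CoeffBound α v Kv → CoeffBound β w Kw →
      (∀ t ∈ Icc (0:ℝ) 1, Summable fun p : ℕ => leviTerm v w p t) ∧
      ContinuousOn (levi v w) (Icc 0 1) ∧
      CoeffBound (α + β) (levi v w) (C * Kv * Kw) := by
  have hσα := one_lt_two_mul_two_rpow_neg hα1
  have hσβ := one_lt_two_mul_two_rpow_neg hβ1
  have hρ : (2 : ℝ) ^ (-α) * 2 ^ (-β) = 2 ^ (-(α + β)) := by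
    rw [neg_add, Real.rpow_add two_pos]
  have h2 : 2 * ((2 : ℝ) ^ (-α) * 2 ^ (-β)) < 1 := hρ ▸ two_mul_two_rpow_neg_lt_one hαβ
  have h4 : 1 < 4 * ((2 : ℝ) ^ (-α) * 2 ^ (-β)) :=
    hρ ▸ one_lt_four_mul_two_rpow_neg (by linarith)
  refine ⟨_, mul_pos (leviConst_pos hσα hσβ) (leviWeightConst_pos h4 h2),
    fun d n v w Kv Kw _ _ hv hw => ?_⟩
  have hL := coeffDecay_levi hv.coeffDecay hw.coeffDecay hσα hσβ h4 h2
  refine ⟨fun t ht => summable_leviTerm hv.coeffDecay hw.coeffDecay hσα hσβ h2 ht,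
    continuousOn_levi hv.coeffDecay hw.coeffDecay hσα hσβ h2,
    coeffBound_of_coeffDecay ?_ (hρ ▸ hL)⟩
  rw [levi_zero, norm_zero, mul_zero]
  exact hL.1

open Sch in
/-- For `α, β ∈ (0,1)` with `α + β > 1`, the Lévy area
`L(v,w) = ∑_p (∫ Δ_p v dS_{p-1}w - ∫ d(S_{p-1}v) Δ_p w)` converges and is a bounded
bilinear operator from `C^α × C^β` to `C^{α+β}`: `‖L(v,w)‖_{α+β} ≲ ‖v‖_α ‖w‖_β`. -/
theorem levy_area_bound (α β : ℝ) (hα0 : 0 < α) (hα1 : α < 1) (hβ0 : 0 < β) (hβ1 : β < 1)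
    (hαβ : 1 < α + β) :
    ∃ C > (0:ℝ), ∀ (d n : ℕ)
      (v : ℝ → (EuclideanSpace ℝ (Fin d) →L[ℝ] EuclideanSpace ℝ (Fin n)))
      (w : ℝ → EuclideanSpace ℝ (Fin d)) (Kv Kw : ℝ),
      ContinuousOn v (Icc 0 1) → ContinuousOn w (Icc 0 1) →
      CoeffBound α v Kv → CoeffBound β w Kw →
      (∀ t ∈ Icc (0:ℝ) 1, Summable fun p : ℕ => leviTerm v w p t) ∧
      ContinuousOn (levi v w) (Icc 0 1) ∧
      CoeffBound (α + β) (levi v w) (C * Kv * Kw) :=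
  levy_area_bound_general α β hα1 hβ1 hαβ
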